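/- Let C be a Z2Z4-additive ACD code. Then Φ(C) and Φ(C⊥) are both linear binary codes if and only if D_C = {2u*v : u ∈ C, v ∈ C⊥} = {0}. -/

import Mathlib

open Finset

/-- The ambient mixed alphabet space `Z2^α × Z4^β`. -/
abbrev Amb (α β : ℕ) := (Fin α → ZMod 2) × (Fin β → ZMod 4)

/-- The binary space `Z2^{α+2β}`, represented as `Z2^α × Z2^β × Z2^β`
(binary part, first Gray bits, second Gray bits). -/
abbrev Bin (α β : ℕ) := (Fin α → ZMod 2) × (Fin β → ZMod 2) × (Fin β → ZMod 2)

/-- The `Z4`-valued inner product `[u,v] = 2·Σ u_i v_i + Σ u'_j v'_j`. -/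
def zinner {α β : ℕ} (u v : Amb α β) : ZMod 4 :=
  2 * ∑ i, ((u.1 i).val : ZMod 4) * ((v.1 i).val : ZMod 4) + ∑ j, u.2 j * v.2 j

/-- The dual of a subset of the mixed ambient space. -/
def zdual {α β : ℕ} (C : Set (Amb α β)) : Set (Amb α β) :=
  {v | ∀ u ∈ C, zinner u v = 0}

/-- The vector `2u*v = (0 | 2u'*v')` (componentwise product; doubling kills the binary part). -/
def star2 {α β : ℕ} (u v : Amb α β) : Amb α β :=
  (0, fun j => 2 * u.2 j * v.2 j)

/-- The usual Gray map `Z4 → Z2²`. -/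
def gray (x : ZMod 4) : ZMod 2 × ZMod 2 :=
  match x.val with
  | 0 => (0, 0)
  | 1 => (0, 1)
  | 2 => (1, 1)
  | _ => (1, 0)

/-- The extended Gray map `Φ : Z2^α × Z4^β → Z2^{α+2β}`. -/
def Phi {α β : ℕ} (u : Amb α β) : Bin α β :=
  (u.1, fun j => (gray (u.2 j)).1, fun j => (gray (u.2 j)).2)

/-- The standard binary inner product on `Z2^{α+2β}`. -/
def binner {α β : ℕ} (x y : Bin α β) : ZMod 2 :=
  ∑ i, x.1 i * y.1 i + ∑ j, x.2.1 j * y.2.1 j + ∑ j, x.2.2 j * y.2.2 j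

/-- The dual of a subset of `Z2^{α+2β}`. -/
def bdual {α β : ℕ} (S : Set (Bin α β)) : Set (Bin α β) :=
  {y | ∀ x ∈ S, binner x y = 0}

/-- A subset of `Z2^{α+2β}` is a linear binary code if it is a linear subspace. -/
def IsLinear {α β : ℕ} (S : Set (Bin α β)) : Prop :=
  ∃ M : Submodule (ZMod 2) (Bin α β), ↑M = S

/-- The set `D_C = {2u*v : u ∈ C, v ∈ C⊥}`. -/
def DC {α β : ℕ} (C : Set (Amb α β)) : Set (Amb α β) :=
  {x | ∃ u ∈ C, ∃ v ∈ zdual C, x = star2 u v}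

/-- The standard binary inner product on `Z2^n`. -/
def binner2 {n : ℕ} (u v : Fin n → ZMod 2) : ZMod 2 := ∑ i, u i * v i

/-- The dual of a subset of `Z2^n`. -/
def bdual2 {n : ℕ} (C : Set (Fin n → ZMod 2)) : Set (Fin n → ZMod 2) :=
  {v | ∀ u ∈ C, binner2 u v = 0}

/-!
Since `Φ u + Φ v = Φ (u + v + 2u*v)` and `Φ` is injective, `Φ(S)` is linear exactly when the
additive code `S` is closed under `(u, v) ↦ 2u*v`. The form `[a, 2b*c] = Σ 2 a'b'c'` is symmetric
in `a, b, c`, which moves such products across the duality: if `C` is closed then `2u*w ∈ C⊥` for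
`u ∈ C`, `w ∈ C⊥`, and if `C⊥` is closed then `2u*w ∈ C⊥⊥ = C`, so `2u*w ∈ C ∩ C⊥ = {0}`.
Conversely, if all these products vanish, products inside `C` lie in `C⊥⊥ = C` and products
inside `C⊥` lie in `C⊥`. Biduality holds because `ℤ/4` is self-injective: a functional on the
quotient by `C` separating a point extends, and every functional is `[·, v]` for some `v`.
-/

theorem ZMod.baer_four : Module.Baer (ZMod 4) (ZMod 4) := by
  have : IsPrincipalIdealRing (ZMod 4) :=
    .of_surjective (Int.castRingHom (ZMod 4)) ZMod.intCast_surjective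
  intro I g
  obtain ⟨a, rfl⟩ := Submodule.IsPrincipal.principal I
  have ha : a ∈ Ideal.span {a} := Ideal.mem_span_singleton_self a
  -- in `ZMod 4`, `g a` is a multiple of `a` as soon as it is killed by the annihilator of `a`
  obtain ⟨x, hx⟩ := (by decide : ∀ a b : ZMod 4, (∀ c, c * a = 0 → c * b = 0) → ∃ x, x * a = b)
    a (g ⟨a, ha⟩) fun c hc => by
      rw [← smul_eq_mul, ← map_smul]
      exact (congrArg g (Subtype.ext hc : c • (⟨a, ha⟩ : Ideal.span {a}) = 0)).trans (map_zero g)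
  refine ⟨LinearMap.toSpanSingleton (ZMod 4) (ZMod 4) x, fun z hz => ?_⟩
  obtain ⟨c, rfl⟩ := Ideal.mem_span_singleton'.mp hz
  have : (⟨c * a, hz⟩ : Ideal.span {a}) = c • ⟨a, ha⟩ := rfl
  rw [this, map_smul, ← hx, LinearMap.toSpanSingleton_apply, smul_eq_mul, smul_eq_mul]
  ring

theorem ZMod.exists_linearMap_four_apply_ne_zero {Q : Type*} [AddCommGroup Q]
    [Module (ZMod 4) Q] {q : Q} (hq : q ≠ 0) : ∃ f : Q →ₗ[ZMod 4] ZMod 4, f q ≠ 0 := by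
  set T := LinearMap.toSpanSingleton (ZMod 4) Q q
  -- the annihilator of `q ≠ 0` contains no unit, so it is killed by `2`
  have hker : LinearMap.ker T ≤ LinearMap.ker (LinearMap.toSpanSingleton (ZMod 4) (ZMod 4) 2) := by
    intro c hc
    simp only [LinearMap.mem_ker, LinearMap.toSpanSingleton_apply, smul_eq_mul, T] at hc ⊢
    by_contra h
    obtain ⟨d, hd⟩ := (by decide : ∀ c : ZMod 4, c * 2 ≠ 0 → ∃ d, d * c = 1) c h
    exact hq (by rw [← one_smul (ZMod 4) q, ← hd, mul_smul, hc, smul_zero])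
  have hinj : Function.Injective ((LinearMap.ker T).liftQ T le_rfl) :=
    LinearMap.ker_eq_bot.mp (Submodule.ker_liftQ_eq_bot _ _ _ le_rfl)
  obtain ⟨f, hf⟩ := ZMod.baer_four.extension_property _ hinj ((LinearMap.ker T).liftQ _ hker)
  refine ⟨f, fun h => ?_⟩
  have := LinearMap.congr_fun hf (Submodule.Quotient.mk 1)
  rw [LinearMap.comp_apply, Submodule.liftQ_apply, Submodule.liftQ_apply] at this
  simp only [T, LinearMap.toSpanSingleton_apply, one_smul, h] at this
  exact absurd this (by decide)

instance : Module (ZMod 4) (ZMod 2) := AddCommGroup.zmodModule (by decide)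

theorem AddMonoidHom.exists_zmod_two_apply_eq (g : ZMod 2 →+ ZMod 4) :
    ∃ b : ZMod 2, ∀ a : ZMod 2, g a = 2 * ((a.val : ZMod 4) * (b.val : ZMod 4)) := by
  have h : g 1 + g 1 = 0 := by rw [← map_add, (by decide : (1 + 1 : ZMod 2) = 0), map_zero]
  obtain ⟨b, hb⟩ := (by decide : ∀ y : ZMod 4, y + y = 0 → ∃ b : ZMod 2, ∀ a : ZMod 2,
    (a.val : ZMod 4) * y = 2 * ((a.val : ZMod 4) * (b.val : ZMod 4))) (g 1) h
  refine ⟨b, fun a => ?_⟩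
  rw [← hb a, ← nsmul_eq_mul, ← map_nsmul, nsmul_one, ZMod.natCast_zmod_val]

theorem AddMonoidHom.zmod_apply_eq_mul {n : ℕ} [NeZero n] (g : ZMod n →+ ZMod n) (a : ZMod n) :
    g a = a * g 1 := by
  conv_lhs => rw [← ZMod.natCast_zmod_val a, ← nsmul_one, map_nsmul, nsmul_eq_mul,
    ZMod.natCast_zmod_val]

section Pairing

variable {α β : ℕ}

theorem zinner_comm (u v : Amb α β) : zinner u v = zinner v u := by
  simp only [zinner, mul_comm]

theorem zinner_zero_right (u : Amb α β) : zinner u 0 = 0 := by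
  simp [zinner]

theorem zinner_add_right (u v w : Amb α β) :
    zinner u (v + w) = zinner u v + zinner u w := by
  have h2 : ∀ a b c : ZMod 2, 2 * ((a.val : ZMod 4) * ((b + c).val : ZMod 4)) =
      2 * ((a.val : ZMod 4) * (b.val : ZMod 4)) + 2 * ((a.val : ZMod 4) * (c.val : ZMod 4)) := by
    decide
  simp only [zinner, Prod.fst_add, Prod.snd_add, Pi.add_apply, mul_add, mul_sum, h2,
    sum_add_distrib]
  abel

def zdualAddSubgroup (C : Set (Amb α β)) : AddSubgroup (Amb α β) where
  carrier := zdual C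
  zero_mem' u _ := zinner_zero_right u
  add_mem' ha hb u hu := by rw [zinner_add_right, ha u hu, hb u hu, add_zero]
  neg_mem' {a} ha u hu := by
    have := zinner_add_right u (-a) a
    rwa [neg_add_cancel, zinner_zero_right, ha u hu, add_zero, eq_comm] at this

theorem exists_zinner_eq (F : Amb α β →+ ZMod 4) : ∃ v : Amb α β, ∀ u, zinner u v = F u := by
  classical
  choose b hb using fun i => AddMonoidHom.exists_zmod_two_apply_eq
    ((F.comp (AddMonoidHom.inl _ _)).comp (AddMonoidHom.single (fun _ => ZMod 2) i))
  refine ⟨(b, fun j => F (0, Pi.single j 1)), fun u => ?_⟩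
  have hu : u = ∑ i, (Pi.single i (u.1 i), 0) + ∑ j, (0, Pi.single j (u.2 j)) := by
    ext <;> simp [Prod.fst_sum, Prod.snd_sum, Finset.univ_sum_single]
  conv_rhs => rw [hu, map_add, map_sum, map_sum]
  simp only [zinner, mul_sum]
  congr 1
  · exact sum_congr rfl fun i _ => (hb i (u.1 i)).symm
  · refine sum_congr rfl fun j _ => ?_
    have := ((F.comp (AddMonoidHom.inr _ _)).comp
      (AddMonoidHom.single (fun _ => ZMod 4) j)).zmod_apply_eq_mul (u.2 j)
    simpa using this.symm

theorem zdual_zdual (C : AddSubgroup (Amb α β)) : zdual (zdual (C : Set (Amb α β))) = C := by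
  refine Set.Subset.antisymm (fun x hx => ?_) fun x hx v hv => zinner_comm v x ▸ hv x hx
  by_contra hxC
  set S := AddSubgroup.toZModSubmodule 4 C
  obtain ⟨f, hf⟩ := ZMod.exists_linearMap_four_apply_ne_zero
    ((Submodule.Quotient.mk_eq_zero S).not.mpr hxC)
  obtain ⟨v, hv⟩ := exists_zinner_eq (f.comp S.mkQ).toAddMonoidHom
  have hvC : v ∈ zdual (C : Set (Amb α β)) := fun u hu => by
    rw [hv u, LinearMap.toAddMonoidHom_coe, LinearMap.comp_apply, Submodule.mkQ_apply,
      (Submodule.Quotient.mk_eq_zero S).mpr hu, map_zero]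
  exact hf (by simpa [hv x, zinner_comm] using hx v hvC)

theorem star2_comm (u v : Amb α β) : star2 u v = star2 v u := by
  simp only [star2, mul_right_comm]

theorem zinner_star2_rotate (a b c : Amb α β) : zinner a (star2 b c) = zinner c (star2 a b) := by
  simp only [zinner, star2, Pi.zero_apply, ZMod.val_zero, Nat.cast_zero, mul_zero, sum_const_zero,
    zero_add]
  exact sum_congr rfl fun j _ => by ring

theorem star2_mem_zdual {S : Set (Amb α β)} (hS : ∀ u ∈ S, ∀ v ∈ S, star2 u v ∈ S)
    {u w : Amb α β} (hu : u ∈ S) (hw : w ∈ zdual S) : star2 u w ∈ zdual S := fun v hv => by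
  rw [zinner_star2_rotate, zinner_comm, hw _ (hS v hv u hu)]

theorem star2_mem_zdual_of_star2_eq_zero {T : Set (Amb α β)} {u : Amb α β}
    (h : ∀ t ∈ T, star2 u t = 0) (v : Amb α β) : star2 u v ∈ zdual T := fun t ht => by
  rw [zinner_star2_rotate, star2_comm, h t ht, zinner_zero_right]

theorem DC_eq_singleton_zero_iff (C : Set (Amb α β)) (h0 : (0 : Amb α β) ∈ C) :
    DC C = {0} ↔ ∀ u ∈ C, ∀ w ∈ zdual C, star2 u w = 0 := by
  refine ⟨fun h u hu w hw => h.subset ⟨u, hu, w, hw, rfl⟩, fun h => ?_⟩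
  refine Set.eq_singleton_iff_unique_mem.mpr ⟨⟨0, h0, 0, fun u _ => zinner_zero_right u, ?_⟩, ?_⟩
  · exact Prod.ext rfl (funext fun _ => by simp [star2])
  · rintro _ ⟨u, hu, w, hw, rfl⟩
    exact h u hu w hw

end Pairing

section Gray

variable {α β : ℕ}

theorem gray_add_add_two_mul : ∀ a b : ZMod 4,
    gray (a + b + 2 * a * b) = ((gray a).1 + (gray b).1, (gray a).2 + (gray b).2) := by
  decide

theorem gray_injective : Function.Injective gray := by
  decide

theorem Phi_injective : Function.Injective (Phi (α := α) (β := β)) := by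
  intro u v h
  simp only [Phi, Prod.mk.injEq] at h
  exact Prod.ext h.1 <| funext fun j =>
    gray_injective (Prod.ext (congrFun h.2.1 j) (congrFun h.2.2 j))

theorem Phi_zero : Phi (0 : Amb α β) = 0 :=
  rfl

theorem Phi_add (u v : Amb α β) : Phi u + Phi v = Phi (u + v + star2 u v) := by
  simp only [Phi, star2, Prod.mk_add_mk, Prod.fst_add, Prod.snd_add, Pi.add_apply, add_zero,
    gray_add_add_two_mul]
  rfl

theorem isLinear_image_Phi_iff (S : AddSubgroup (Amb α β)) :
    IsLinear (Phi '' (S : Set (Amb α β))) ↔ ∀ u ∈ S, ∀ v ∈ S, star2 u v ∈ S := by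
  constructor
  · rintro ⟨M, hM⟩ u hu v hv
    have hPhi : ∀ w ∈ S, Phi w ∈ M := fun w hw => by
      rw [← SetLike.mem_coe, hM]
      exact ⟨w, hw, rfl⟩
    obtain ⟨w, hw, hwuv⟩ : Phi u + Phi v ∈ Phi '' S := by
      rw [← hM]
      exact M.add_mem (hPhi u hu) (hPhi v hv)
    rw [Phi_add, Phi_injective.eq_iff] at hwuv
    have : star2 u v = w - u - v := by rw [hwuv]; abel
    exact this ▸ S.sub_mem (S.sub_mem hw hu) hv
  · intro hS
    refine ⟨AddSubgroup.toZModSubmodule 2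
      { carrier := Phi '' S
        zero_mem' := ⟨0, S.zero_mem, Phi_zero⟩
        add_mem' := ?_
        neg_mem' := fun {x} hx => (ZModModule.neg_eq_self x).symm ▸ hx }, rfl⟩
    rintro _ _ ⟨u, hu, rfl⟩ ⟨v, hv, rfl⟩
    exact ⟨_, S.add_mem (S.add_mem hu hv) (hS u hu v hv), (Phi_add u v).symm⟩

end Gray

/-- For an ACD code `C`, `Φ(C)` and `Φ(C⊥)` are both linear iff `D_C = {0}`. -/
theorem stmt10 {α β : ℕ} (C : AddSubgroup (Amb α β))
    (hACD : ∀ x ∈ C, x ∈ zdual (C : Set (Amb α β)) → x = 0) :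
    (IsLinear (Phi '' (C : Set (Amb α β))) ∧
     IsLinear (Phi '' zdual (C : Set (Amb α β)))) ↔
      DC (C : Set (Amb α β)) = {0} := by
  have hdual : IsLinear (Phi '' zdual (C : Set (Amb α β))) ↔ ∀ u ∈ zdual (C : Set (Amb α β)),
      ∀ v ∈ zdual (C : Set (Amb α β)), star2 u v ∈ zdual (C : Set (Amb α β)) :=
    isLinear_image_Phi_iff (zdualAddSubgroup (C : Set (Amb α β)))
  rw [isLinear_image_Phi_iff, hdual, DC_eq_singleton_zero_iff _ C.zero_mem]
  constructor
  · rintro ⟨hC, hCperp⟩ u hu w hw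
    refine hACD _ ?_ (star2_mem_zdual hC hu hw)
    rw [← SetLike.mem_coe, ← zdual_zdual C, star2_comm]
    exact star2_mem_zdual hCperp hw ((zdual_zdual C).symm ▸ hu)
  · intro h
    refine ⟨fun u hu v _ => ?_, fun u hu v _ => ?_⟩
    · rw [← SetLike.mem_coe, ← zdual_zdual C]
      exact star2_mem_zdual_of_star2_eq_zero (h u hu) v
    · exact star2_mem_zdual_of_star2_eq_zero (fun t ht => star2_comm u t ▸ h t ht u hu) v
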